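/- Define W(x) = (√x + 1)·√(2 − √x) / (2π·x^{1/4}) for x ∈ (0,4). Then W(x) ≥ 0 on (0,4) and for every natural number m, ∫₀⁴ x^m · W(x) dx = A_m(2, 3/2) = (3/2)·Γ(2m + 3/2) / (m!·Γ(m + 5/2)). -/

import Mathlib

/-!
Substituting `x = t²` turns the `m`-th moment of `W` into
`π⁻¹ ∫₀² (t^(2m+3/2) + t^(2m+1/2)) √(2 - t) dt`, a sum of two Beta integrals. Evaluated through
Gamma values and simplified with Legendre's duplication formula for `Γ(m + 2) Γ(m + 5/2)`, this
is `(3/2) Γ(2m + 3/2) / (m! Γ(m + 5/2))`; and the product defining a Raney number is a ratio of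
two Gamma values.
-/

open Real

/-- The Raney numbers (two-parameter Fuss–Catalan numbers):
`A 0 (p,r) = 1` and `A m (p,r) = (r/m!)·∏_{i=1}^{m−1} (m·p + r − i)` for `m ≥ 1`. -/
noncomputable def raney (p r : ℝ) : ℕ → ℝ
  | 0 => 1
  | (m + 1) => (r / (Nat.factorial (m + 1) : ℝ)) *
      ∏ i ∈ Finset.Icc 1 m, (((m : ℝ) + 1) * p + r - (i : ℝ))

open MeasureTheory

lemma Gamma_eq_Gamma_sub_nat_mul_prod {y : ℝ} {n : ℕ} (h : (n : ℝ) < y) :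
    Gamma y = Gamma (y - n) * ∏ i ∈ Finset.Icc 1 n, (y - i) := by
  induction n with
  | zero => simp
  | succ n ih =>
    push_cast at h
    rw [ih (by linarith), Finset.prod_Icc_succ_top (by omega),
      show y - n = (y - (n + 1)) + 1 by ring, Gamma_add_one (by linarith)]
    push_cast
    ring

lemma raney_eq_Gamma {p r : ℝ} (hp : 1 ≤ p) (hr : 0 < r) (m : ℕ) :
    raney p r m = r * Gamma (m * p + r) / (m.factorial * Gamma (m * (p - 1) + r + 1)) := by
  cases m with
  | zero =>
    simp only [raney, CharP.cast_eq_zero, zero_mul, zero_add, Nat.factorial_zero, Nat.cast_one,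
      one_mul, Gamma_add_one hr.ne']
    field_simp [(Gamma_pos_of_pos hr).ne']
  | succ m =>
    have hm : (m : ℝ) < (m + 1 : ℕ) * p + r := by push_cast; nlinarith
    have hpos : 0 < Gamma ((m + 1 : ℕ) * p + r - m) := Gamma_pos_of_pos (by linarith)
    rw [Gamma_eq_Gamma_sub_nat_mul_prod hm,
      show ((m + 1 : ℕ) : ℝ) * (p - 1) + r + 1 = (m + 1 : ℕ) * p + r - m by push_cast; ring]
    simp only [raney]
    push_cast at hpos ⊢
    field_simp

lemma integral_rpow_mul_one_sub_rpow {u v : ℝ} (hu : 0 < u) (hv : 0 < v) :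
    ∫ x in (0 : ℝ)..1, x ^ (u - 1) * (1 - x) ^ (v - 1) = Gamma u * Gamma v / Gamma (u + v) := by
  have hbeta : Complex.betaIntegral u v =
      ((∫ x in (0 : ℝ)..1, x ^ (u - 1) * (1 - x) ^ (v - 1) : ℝ) : ℂ) := by
    rw [Complex.betaIntegral, ← intervalIntegral.integral_ofReal]
    refine intervalIntegral.integral_congr fun x hx => ?_
    rw [Set.uIcc_of_le zero_le_one] at hx
    push_cast
    rw [Complex.ofReal_cpow hx.1, Complex.ofReal_cpow (by linarith [hx.2])]
    push_cast
    ring_nf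
  have h := Complex.Gamma_mul_Gamma_eq_betaIntegral (s := u) (t := v)
    (by simpa using hu) (by simpa using hv)
  rw [hbeta, ← Complex.ofReal_add, Complex.Gamma_ofReal, Complex.Gamma_ofReal,
    Complex.Gamma_ofReal, ← Complex.ofReal_mul, ← Complex.ofReal_mul] at h
  rw [Complex.ofReal_injective h, mul_div_cancel_left₀ _ (Gamma_pos_of_pos (by linarith)).ne']

lemma integral_rpow_mul_sub_rpow {c u v : ℝ} (hc : 0 < c) (hu : 0 < u) (hv : 0 < v) :
    ∫ t in (0 : ℝ)..c, t ^ (u - 1) * (c - t) ^ (v - 1) =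
      c ^ (u + v - 1) * (Gamma u * Gamma v / Gamma (u + v)) := by
  have hscale := intervalIntegral.smul_integral_comp_mul_left
    (fun t => t ^ (u - 1) * (c - t) ^ (v - 1)) c (a := 0) (b := 1)
  simp only [mul_zero, mul_one, smul_eq_mul] at hscale
  rw [← hscale, ← integral_rpow_mul_one_sub_rpow hu hv, ← intervalIntegral.integral_const_mul,
    ← intervalIntegral.integral_const_mul]
  refine intervalIntegral.integral_congr fun s hs => ?_
  rw [Set.uIcc_of_le zero_le_one] at hs
  rw [mul_rpow hc.le hs.1, show c - c * s = c * (1 - s) by ring,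
    mul_rpow hc.le (by linarith [hs.2]), show u + v - 1 = 1 + (u - 1) + (v - 1) by ring,
    rpow_add hc, rpow_add hc, rpow_one]
  ring

noncomputable def raneyDensity (x : ℝ) : ℝ :=
  (√x + 1) * √(2 - √x) / (2 * π * x ^ ((1 : ℝ) / 4))

lemma pow_mul_raneyDensity_sq_mul {t : ℝ} (ht : 0 < t) (m : ℕ) :
    (t ^ 2) ^ m * raneyDensity (t ^ 2) * (2 * t) =
      π⁻¹ * (t ^ ((2 * m + 5 / 2 : ℝ) - 1) * (2 - t) ^ ((3 / 2 : ℝ) - 1) +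
        t ^ ((2 * m + 3 / 2 : ℝ) - 1) * (2 - t) ^ ((3 / 2 : ℝ) - 1)) := by
  have hquarter : (t ^ 2) ^ ((1 : ℝ) / 4) = √t := by
    rw [sqrt_eq_rpow, ← rpow_natCast, ← rpow_mul ht.le]
    norm_num
  have h1 : t ^ ((2 * m + 5 / 2 : ℝ) - 1) = t ^ (2 * m + 1) * √t := by
    rw [sqrt_eq_rpow, ← rpow_natCast, ← rpow_add ht]
    push_cast; ring_nf
  have h2 : t ^ ((2 * m + 3 / 2 : ℝ) - 1) = t ^ (2 * m) * √t := by
    rw [sqrt_eq_rpow, ← rpow_natCast, ← rpow_add ht]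
    push_cast; ring_nf
  rw [raneyDensity, sqrt_sq ht.le, hquarter, h1, h2,
    show (3 / 2 : ℝ) - 1 = 1 / 2 by norm_num, ← sqrt_eq_rpow]
  field_simp
  rw [sq_sqrt ht.le]
  ring

lemma inv_pi_mul_beta_sum_eq (m : ℕ) :
    π⁻¹ * (2 ^ (2 * m + 3) * (Gamma (2 * m + 5 / 2) * Gamma (3 / 2) / Gamma (2 * m + 4)) +
        2 ^ (2 * m + 2) * (Gamma (2 * m + 3 / 2) * Gamma (3 / 2) / Gamma (2 * m + 3))) =
      3 / 2 * Gamma (2 * m + 3 / 2) / (m.factorial * Gamma (m + 5 / 2)) := by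
  have h52 : Gamma (2 * m + 5 / 2) = (2 * m + 3 / 2) * Gamma (2 * m + 3 / 2) := by
    rw [← Gamma_add_one (by positivity)]; ring_nf
  have h4 : Gamma (2 * m + 4) = (2 * m + 3) * Gamma (2 * m + 3) := by
    rw [← Gamma_add_one (by positivity)]; ring_nf
  have hhalf : Gamma (3 / 2) = √π / 2 := by
    rw [show (3 / 2 : ℝ) = 1 / 2 + 1 by norm_num, Gamma_add_one (by norm_num), Gamma_one_half_eq]
    ring
  have hdup := Gamma_mul_Gamma_add_half (m + 2)
  rw [show (m : ℝ) + 2 = (m + 1 : ℕ) + 1 by push_cast; ring, Gamma_nat_eq_factorial,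
    Nat.factorial_succ, show ((m + 1 : ℕ) : ℝ) + 1 + 1 / 2 = m + 5 / 2 by push_cast; ring,
    show 2 * (((m + 1 : ℕ) : ℝ) + 1) = 2 * m + 4 by push_cast; ring,
    show 1 - (2 * (m : ℝ) + 4) = -((2 * m + 3 : ℕ) : ℝ) by push_cast; ring,
    rpow_neg zero_le_two, rpow_natCast, h4] at hdup
  have hpi : √π ^ 2 = π := sq_sqrt pi_pos.le
  rw [h52, h4, hhalf]
  push_cast at hdup
  have hA : 0 < Gamma (2 * m + 3) := Gamma_pos_of_pos (by positivity)
  have hB : 0 < Gamma (m + 5 / 2) := Gamma_pos_of_pos (by positivity)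
  -- keeps `field_simp` from rewriting the Gamma arguments differently in goal and `hdup`
  generalize Gamma (2 * m + 3) = A at *
  generalize Gamma (m + 5 / 2) = B at *
  generalize Gamma (2 * m + 3 / 2) = C
  field_simp
  field_simp at hdup
  linear_combination 6 * C * √π * hdup + 6 * C * (2 * (m : ℝ) + 3) * A * hpi

lemma integral_pow_mul_raneyDensity (m : ℕ) :
    ∫ x in (0 : ℝ)..4, x ^ m * raneyDensity x =
      3 / 2 * Gamma (2 * m + 3 / 2) / (m.factorial * Gamma (m + 5 / 2)) := by
  have hsubst := intervalIntegral.integral_comp_mul_deriv_of_deriv_nonneg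
    (f := fun t => t ^ 2) (f' := fun t => 2 * t) (g := fun x => x ^ m * raneyDensity x)
    (a := 0) (b := 2) (continuous_pow 2).continuousOn
    (fun t _ => by simpa using hasDerivAt_pow 2 t) (fun t ht => by simp at ht; linarith [ht.1])
  norm_num only [Function.comp_apply] at hsubst
  have hm : (0 : ℝ) ≤ m := m.cast_nonneg
  have hint : ∀ {u : ℝ}, 1 ≤ u →
      IntervalIntegrable (fun t => t ^ (u - 1) * (2 - t) ^ ((3 / 2 : ℝ) - 1)) volume 0 2 :=
    fun hu => ((continuous_rpow_const (by linarith)).mul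
      ((continuous_const.sub continuous_id).rpow_const fun _ => by norm_num)).intervalIntegrable _ _
  rw [← hsubst, intervalIntegral.integral_congr_ae (g := fun t => π⁻¹ * _)
      (Filter.Eventually.of_forall
        fun t ht => pow_mul_raneyDensity_sq_mul (by simpa using ht.1) m),
    intervalIntegral.integral_const_mul,
    intervalIntegral.integral_add (hint (by linarith)) (hint (by linarith)),
    integral_rpow_mul_sub_rpow two_pos (by positivity) (by norm_num),
    integral_rpow_mul_sub_rpow two_pos (by positivity) (by norm_num), ← inv_pi_mul_beta_sum_eq,
    show (2 * m + 5 / 2 : ℝ) + 3 / 2 - 1 = (2 * m + 3 : ℕ) by push_cast; ring,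
    show (2 * m + 3 / 2 : ℝ) + 3 / 2 - 1 = (2 * m + 2 : ℕ) by push_cast; ring,
    rpow_natCast, rpow_natCast, show (2 * m + 5 / 2 : ℝ) + 3 / 2 = 2 * m + 4 by ring,
    show (2 * m + 3 / 2 : ℝ) + 3 / 2 = 2 * m + 3 by ring]

/-- For `W(x) = (√x + 1)·√(2 − √x)/(2π·x^(1/4))` on `(0,4)`: `W ≥ 0` on `(0,4)`
and `∫₀⁴ x^m·W(x) dx = A_m(2,3/2) = (3/2)·Γ(2m + 3/2)/(m!·Γ(m + 5/2))` for every `m`. -/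
theorem stmt_8 :
    (∀ x ∈ Set.Ioo (0 : ℝ) 4,
      0 ≤ (Real.sqrt x + 1) * Real.sqrt (2 - Real.sqrt x) / (2 * π * x ^ ((1 : ℝ) / 4))) ∧
    ∀ m : ℕ,
      (∫ x in (0:ℝ)..4,
        x ^ m * ((Real.sqrt x + 1) * Real.sqrt (2 - Real.sqrt x) / (2 * π * x ^ ((1 : ℝ) / 4))))
      = raney 2 (3 / 2) m ∧
      raney 2 (3 / 2) m =
        (3 / 2) * Gamma (2 * (m : ℝ) + 3 / 2) /
          ((Nat.factorial m : ℝ) * Gamma ((m : ℝ) + 5 / 2)) := by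
  refine ⟨fun x hx => by have := hx.1; positivity, fun m => ?_⟩
  have hraney : raney 2 (3 / 2) m =
      3 / 2 * Gamma (2 * m + 3 / 2) / (m.factorial * Gamma (m + 5 / 2)) := by
    rw [raney_eq_Gamma one_le_two (by norm_num), show (m : ℝ) * 2 + 3 / 2 = 2 * m + 3 / 2 by ring,
      show (m : ℝ) * (2 - 1) + 3 / 2 + 1 = m + 5 / 2 by ring]
  exact ⟨(integral_pow_mul_raneyDensity m).trans hraney.symm, hraney⟩
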